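/- Consider the Gibbs measure on ℝ² with density proportional to exp(β J φ₁ φ₂ − β f₁(φ₁) − β f₂(φ₂)) where β > 0, J ≥ 0, and f₁, f₂ are such that the measure is well-defined with finite second moments. Then ⟨φ₁ φ₂⟩ − ⟨φ₁⟩⟨φ₂⟩ ≥ 0. -/
import Mathlib

open MeasureTheory

/-- The coordinate permutation `((x,y),(u,v)) ↦ ((x,v),(u,y))` as a measurable equiv. -/
def swapMidEquiv : (ℝ × ℝ) × (ℝ × ℝ) ≃ᵐ (ℝ × ℝ) × (ℝ × ℝ) where
  toFun z := ((z.1.1, z.2.2), (z.2.1, z.1.2))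
  invFun z := ((z.1.1, z.2.2), (z.2.1, z.1.2))
  left_inv z := rfl
  right_inv z := rfl
  measurable_toFun :=
    (measurable_fst.fst.prodMk measurable_snd.snd).prodMk
      (measurable_snd.fst.prodMk measurable_fst.snd)
  measurable_invFun :=
    (measurable_fst.fst.prodMk measurable_snd.snd).prodMk
      (measurable_snd.fst.prodMk measurable_fst.snd)

lemma swapMid_measurePreserving :
    MeasurePreserving (⇑swapMidEquiv) (volume : Measure ((ℝ × ℝ) × (ℝ × ℝ))) volume := by
  have mp1 : MeasurePreserving (MeasurableEquiv.prodAssoc : (ℝ × ℝ) × (ℝ × ℝ) ≃ᵐ ℝ × ℝ × ℝ × ℝ)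
      volume volume := MeasureTheory.volume_preserving_prodAssoc
  have mpassoc : MeasurePreserving (MeasurableEquiv.prodAssoc : (ℝ × ℝ) × ℝ ≃ᵐ ℝ × ℝ × ℝ)
      volume volume := MeasureTheory.volume_preserving_prodAssoc
  have mpswap1 : MeasurePreserving (Prod.swap : (ℝ × ℝ) × ℝ → ℝ × (ℝ × ℝ)) volume volume :=
    Measure.measurePreserving_swap
  have mpswap2 : MeasurePreserving (Prod.swap : ℝ × ℝ → ℝ × ℝ) volume volume :=
    Measure.measurePreserving_swap
  have gmp : MeasurePreserving
      (fun p : ℝ × (ℝ × ℝ) => Prod.map id Prod.swap (Prod.swap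
        (MeasurableEquiv.prodAssoc.symm p))) volume volume :=
    MeasurePreserving.comp
      (MeasurePreserving.comp ((MeasurePreserving.id volume).prod mpswap2) mpswap1)
      (MeasurePreserving.symm _ mpassoc)
  have e2mp : MeasurePreserving
      (Prod.map (id : ℝ → ℝ) (fun p : ℝ × (ℝ × ℝ) => Prod.map id Prod.swap (Prod.swap
        (MeasurableEquiv.prodAssoc.symm p)))) volume volume :=
    (MeasurePreserving.id volume).prod gmp
  have heq : (⇑swapMidEquiv : (ℝ × ℝ) × (ℝ × ℝ) → (ℝ × ℝ) × (ℝ × ℝ)) =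
      ((⇑(MeasurableEquiv.prodAssoc : (ℝ × ℝ) × (ℝ × ℝ) ≃ᵐ ℝ × ℝ × ℝ × ℝ).symm ∘
        Prod.map (id : ℝ → ℝ) (fun p : ℝ × (ℝ × ℝ) => Prod.map id Prod.swap (Prod.swap
          (MeasurableEquiv.prodAssoc.symm p)))) ∘
        ⇑(MeasurableEquiv.prodAssoc : (ℝ × ℝ) × (ℝ × ℝ) ≃ᵐ ℝ × ℝ × ℝ × ℝ)) := by
    funext z; rfl
  rw [heq]
  exact MeasurePreserving.comp
    (MeasurePreserving.comp (MeasurePreserving.symm _ mp1) e2mp) mp1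

/-- The two-spin ferromagnetic Gibbs measure on `ℝ²` with weight
`exp (β J φ₁ φ₂ - β f₁ φ₁ - β f₂ φ₂)`, `J ≥ 0`, has nonnegative connected
correlation `⟨φ₁ φ₂⟩ - ⟨φ₁⟩⟨φ₂⟩`. -/
theorem two_spin_griffiths
    (β J : ℝ) (hβ : 0 < β) (hJ : 0 ≤ J) (f₁ f₂ : ℝ → ℝ)
    (w : ℝ × ℝ → ℝ)
    (hw : ∀ p : ℝ × ℝ, w p = Real.exp (β * J * p.1 * p.2 - β * f₁ p.1 - β * f₂ p.2))
    (hwInt : Integrable w)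
    (h1 : Integrable (fun p : ℝ × ℝ => p.1 * w p))
    (h2 : Integrable (fun p : ℝ × ℝ => p.2 * w p))
    (h11 : Integrable (fun p : ℝ × ℝ => p.1 ^ 2 * w p))
    (h22 : Integrable (fun p : ℝ × ℝ => p.2 ^ 2 * w p))
    (h12 : Integrable (fun p : ℝ × ℝ => p.1 * p.2 * w p)) :
    0 ≤ (∫ p : ℝ × ℝ, p.1 * p.2 * w p) / (∫ p : ℝ × ℝ, w p) -
        ((∫ p : ℝ × ℝ, p.1 * w p) / (∫ p : ℝ × ℝ, w p)) *
        ((∫ p : ℝ × ℝ, p.2 * w p) / (∫ p : ℝ × ℝ, w p)) := by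
  set Z := ∫ p : ℝ × ℝ, w p with hZ
  set A := ∫ p : ℝ × ℝ, p.1 * w p with hA
  set B := ∫ p : ℝ × ℝ, p.2 * w p with hB
  set C := ∫ p : ℝ × ℝ, p.1 * p.2 * w p with hC
  have hwfun : w = fun p : ℝ × ℝ => Real.exp (β * J * p.1 * p.2 - β * f₁ p.1 - β * f₂ p.2) :=
    funext hw
  have hZpos : 0 < Z := by
    rw [hZ, hwfun]
    exact integral_exp_pos (hwfun ▸ hwInt)
  set F : (ℝ × ℝ) × (ℝ × ℝ) → ℝ :=
    fun z => (z.1.1 - z.2.1) * (z.1.2 - z.2.2) * (w z.1 * w z.2) with hF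
  have hFe : F = fun z : (ℝ × ℝ) × (ℝ × ℝ) =>
      (z.1.1 * z.1.2 * w z.1) * w z.2 - (z.1.1 * w z.1) * (z.2.2 * w z.2)
      - (z.1.2 * w z.1) * (z.2.1 * w z.2) + w z.1 * (z.2.1 * z.2.2 * w z.2) := by
    funext z; simp only [hF]; ring
  have hI1 : Integrable (fun z : (ℝ × ℝ) × (ℝ × ℝ) => (z.1.1 * z.1.2 * w z.1) * w z.2) :=
    h12.mul_prod hwInt
  have hI2 : Integrable (fun z : (ℝ × ℝ) × (ℝ × ℝ) => (z.1.1 * w z.1) * (z.2.2 * w z.2)) :=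
    h1.mul_prod h2
  have hI3 : Integrable (fun z : (ℝ × ℝ) × (ℝ × ℝ) => (z.1.2 * w z.1) * (z.2.1 * w z.2)) :=
    h2.mul_prod h1
  have hI4 : Integrable (fun z : (ℝ × ℝ) × (ℝ × ℝ) => w z.1 * (z.2.1 * z.2.2 * w z.2)) :=
    hwInt.mul_prod h12
  have hFInt : Integrable F := by
    rw [hFe]
    exact ((hI1.sub hI2).sub hI3).add hI4
  have hI12 : Integrable (fun z : (ℝ × ℝ) × (ℝ × ℝ) =>
      (z.1.1 * z.1.2 * w z.1) * w z.2 - (z.1.1 * w z.1) * (z.2.2 * w z.2)) := hI1.sub hI2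
  have hI123 : Integrable (fun z : (ℝ × ℝ) × (ℝ × ℝ) =>
      (z.1.1 * z.1.2 * w z.1) * w z.2 - (z.1.1 * w z.1) * (z.2.2 * w z.2)
      - (z.1.2 * w z.1) * (z.2.1 * w z.2)) := hI12.sub hI3
  have hKval : ∫ z, F z = 2 * (C * Z - A * B) := by
    simp only [hFe]
    rw [integral_add hI123 hI4, integral_sub hI12 hI3, integral_sub hI1 hI2]
    rw [show (volume : Measure ((ℝ × ℝ) × (ℝ × ℝ))) = volume.prod volume from rfl]
    rw [integral_prod_mul (fun p : ℝ × ℝ => p.1 * p.2 * w p) w,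
      integral_prod_mul (fun p : ℝ × ℝ => p.1 * w p) (fun p : ℝ × ℝ => p.2 * w p),
      integral_prod_mul (fun p : ℝ × ℝ => p.2 * w p) (fun p : ℝ × ℝ => p.1 * w p),
      integral_prod_mul w (fun p : ℝ × ℝ => p.1 * p.2 * w p)]
    rw [← hZ, ← hA, ← hB, ← hC]
    ring
  have key : ∀ z : (ℝ × ℝ) × (ℝ × ℝ), 0 ≤ F z + F (swapMidEquiv z) := by
    rintro ⟨⟨x, y⟩, ⟨u, v⟩⟩
    have hFz : F ((x, y), (u, v)) + F (swapMidEquiv ((x, y), (u, v)))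
        = (x - u) * (y - v) * (w (x, y) * w (u, v) - w (x, v) * w (u, y)) := by
      show F ((x, y), (u, v)) + F ((x, v), (u, y)) = _
      simp only [hF]; ring
    rw [hFz, hw (x, y), hw (u, v), hw (x, v), hw (u, y), ← Real.exp_add, ← Real.exp_add]
    rcases le_total 0 ((x - u) * (y - v)) with h | h
    · apply mul_nonneg h
      rw [sub_nonneg]
      apply Real.exp_le_exp.mpr
      nlinarith [mul_nonneg (mul_nonneg hβ.le hJ) h]
    · have hE : Real.exp (β * J * x * y - β * f₁ x - β * f₂ y +
          (β * J * u * v - β * f₁ u - β * f₂ v)) ≤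
          Real.exp (β * J * x * v - β * f₁ x - β * f₂ v +
          (β * J * u * y - β * f₁ u - β * f₂ y)) := by
        apply Real.exp_le_exp.mpr
        nlinarith [mul_nonneg (mul_nonneg hβ.le hJ) (neg_nonneg.mpr h)]
      nlinarith [mul_nonneg (neg_nonneg.mpr h) (sub_nonneg.mpr hE)]
  have hFTInt : Integrable (fun z => F (swapMidEquiv z)) :=
    (swapMid_measurePreserving.integrable_comp_emb
      swapMidEquiv.measurableEmbedding).mpr hFInt
  have hFTint_eq : ∫ z, F (swapMidEquiv z) = ∫ z, F z :=
    swapMid_measurePreserving.integral_comp swapMidEquiv.measurableEmbedding F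
  have hsum : 0 ≤ ∫ z, (F z + F (swapMidEquiv z)) := integral_nonneg key
  rw [integral_add hFInt hFTInt, hFTint_eq] at hsum
  have hKnonneg : 0 ≤ C * Z - A * B := by
    have h2K : 0 ≤ 2 * (C * Z - A * B) := by rw [← hKval]; linarith
    linarith
  have hrw : C / Z - A / Z * (B / Z) = (C * Z - A * B) / (Z * Z) := by
    field_simp
  rw [hrw]
  exact div_nonneg hKnonneg (mul_nonneg hZpos.le hZpos.le)
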